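/- arXiv:1707.06904 — 3 statements merged into one kernel-verified Lean document; each statement's English description precedes it below -/
import Mathlib

section
/- Under Assumption A1, n^{-1} Σ_{t=1}^{n} u_t⁴ converges in probability, as n → ∞, to E[ε_1⁴] · ∫_0^1 g(r)⁴ dr. -/
/-!
By the strong law of large numbers the Cesàro means of the i.i.d. integrable variables `ε_t⁴`
converge almost surely to `E[ε₁⁴]`, and almost sure convergence implies convergence in
probability. What remains is deterministic: if the Cesàro means of `Y` tend to `m`, then
`n⁻¹ ∑ w(t/n) Y_t → m ∫₀¹ w` for the Lipschitz weight `w = g⁴`. Writing `Y_t = m + Z_t`, the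
`m`-part is a Riemann sum of `w`, and summation by parts bounds the `Z`-part by Cesàro means of
`|Z₁ + ⋯ + Z_k| / k`, because consecutive weights differ by at most `K / n`.
-/

open MeasureTheory ProbabilityTheory Filter

open Topology Finset Set NNReal Interval

theorem LipschitzOnWith.norm_le_add_mul_dist {α E : Type*} [PseudoMetricSpace α]
    [SeminormedAddCommGroup E] {K : ℝ≥0} {f : α → E} {s : Set α} (hf : LipschitzOnWith K f s)
    {x₀ x : α} (hx₀ : x₀ ∈ s) (hx : x ∈ s) : ‖f x‖ ≤ ‖f x₀‖ + K * dist x x₀ := by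
  calc ‖f x‖ ≤ ‖f x₀‖ + dist (f x) (f x₀) := by
        rw [dist_eq_norm]; exact norm_le_norm_add_norm_sub' _ _
    _ ≤ ‖f x₀‖ + K * dist x x₀ := by grw [hf.dist_le_mul x hx x₀ hx₀]

theorem LipschitzOnWith.mul_of_norm_le {α R : Type*} [PseudoMetricSpace α] [SeminormedRing R]
    {s : Set α} {f h : α → R} {Kf Kh A B : ℝ≥0} (hf : LipschitzOnWith Kf f s)
    (hh : LipschitzOnWith Kh h s) (hfA : ∀ x ∈ s, ‖f x‖ ≤ A) (hhB : ∀ x ∈ s, ‖h x‖ ≤ B) :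
    LipschitzOnWith (A * Kh + B * Kf) (fun x => f x * h x) s := by
  refine LipschitzOnWith.of_dist_le_mul fun x hx y hy => ?_
  have hf' := hf.dist_le_mul x hx y hy
  have hh' := hh.dist_le_mul x hx y hy
  rw [dist_eq_norm] at hf' hh' ⊢
  calc ‖f x * h x - f y * h y‖ = ‖f x * (h x - h y) + (f x - f y) * h y‖ := by noncomm_ring
    _ ≤ ‖f x‖ * ‖h x - h y‖ + ‖f x - f y‖ * ‖h y‖ :=
        (norm_add_le _ _).trans (add_le_add (norm_mul_le _ _) (norm_mul_le _ _))
    _ ≤ A * (Kh * dist x y) + Kf * dist x y * B := by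
        gcongr
        exacts [hfA x hx, hhB y hy]
    _ = ↑(A * Kh + B * Kf) * dist x y := by push_cast; ring

theorem LipschitzOnWith.pow_of_norm_le {α R : Type*} [PseudoMetricSpace α] [SeminormedRing R]
    [NormOneClass R] {s : Set α} {f : α → R} {K A : ℝ≥0} (hf : LipschitzOnWith K f s)
    (hfA : ∀ x ∈ s, ‖f x‖ ≤ A) :
    ∀ n : ℕ, LipschitzOnWith (n * A ^ (n - 1) * K) (fun x => f x ^ n) s
  | 0 => by simpa using (LipschitzWith.const (1 : R)).lipschitzOnWith
  | n + 1 => by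
    have hfn : ∀ x ∈ s, ‖f x ^ n‖ ≤ ↑(A ^ n) := fun x hx =>
      (norm_pow_le _ n).trans (by rw [NNReal.coe_pow]; gcongr; exact hfA x hx)
    convert (pow_of_norm_le hf hfA n).mul_of_norm_le hf hfn hfA using 1
    · rcases n with _ | n
      · simp
      · push_cast [Nat.add_sub_cancel]; ring
    · ext x; rw [pow_succ]

theorem LipschitzOnWith.integrableOn_Ioc {E : Type*} [NormedAddCommGroup E] {K : ℝ≥0}
    {w : ℝ → E} {a b : ℝ} (hw : LipschitzOnWith K w (Ioc a b)) : IntegrableOn w (Ioc a b) := by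
  refine .of_bound measure_Ioc_lt_top
    (hw.continuousOn.aestronglyMeasurable measurableSet_Ioc) (‖w b‖ + K * (b - a)) ?_
  filter_upwards [ae_restrict_mem measurableSet_Ioc] with x hx
  refine (hw.norm_le_add_mul_dist ⟨hx.1.trans_le hx.2, le_rfl⟩ hx).trans ?_
  rw [Real.dist_eq, abs_of_nonpos (by linarith [hx.2])]
  gcongr; linarith [hx.1]

theorem LipschitzOnWith.abs_sub_integral_le {K : ℝ≥0} {w : ℝ → ℝ} {s : Set ℝ}
    (hw : LipschitzOnWith K w s) {a b : ℝ} (hab : a ≤ b) (hs : Ioc a b ⊆ s) :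
    |(b - a) * w b - ∫ x in a..b, w x| ≤ K * (b - a) ^ 2 := by
  have hint : IntervalIntegrable w volume a b :=
    (intervalIntegrable_iff_integrableOn_Ioc_of_le hab).2 (hw.mono hs).integrableOn_Ioc
  have hbound : ∀ x ∈ Ι a b, ‖w b - w x‖ ≤ K * (b - a) := by
    intro x hx
    rw [uIoc_of_le hab] at hx
    have hb : b ∈ Ioc a b := ⟨hx.1.trans_le hx.2, le_rfl⟩
    rw [← dist_eq_norm]
    refine (hw.dist_le_mul b (hs hb) x (hs hx)).trans ?_
    rw [Real.dist_eq, abs_of_nonneg (by linarith [hx.2])]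
    gcongr; linarith [hx.1]
  calc |(b - a) * w b - ∫ x in a..b, w x| = ‖∫ x in a..b, (w b - w x)‖ := by
        rw [intervalIntegral.integral_sub intervalIntegrable_const hint,
          intervalIntegral.integral_const, smul_eq_mul, Real.norm_eq_abs]
    _ ≤ K * (b - a) * |b - a| := intervalIntegral.norm_integral_le_of_norm_le_const hbound
    _ = K * (b - a) ^ 2 := by rw [abs_of_nonneg (sub_nonneg.2 hab)]; ring

theorem add_one_div_mem_Ioc {i n : ℕ} (hi : i < n) : ((i : ℝ) + 1) / n ∈ Ioc (0 : ℝ) 1 := by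
  have hn : (0 : ℝ) < n := by exact_mod_cast (Nat.zero_le i).trans_lt hi
  refine ⟨by positivity, (div_le_one hn).2 ?_⟩
  exact_mod_cast hi

theorem LipschitzOnWith.tendsto_riemann_sum {K : ℝ≥0} {w : ℝ → ℝ}
    (hw : LipschitzOnWith K w (Ioc 0 1)) :
    Tendsto (fun n : ℕ => (n : ℝ)⁻¹ * ∑ i ∈ range n, w (((i : ℝ) + 1) / n)) atTop
      (𝓝 (∫ r in Ioc 0 1, w r)) := by
  rw [← intervalIntegral.integral_of_le zero_le_one, ← tendsto_sub_nhds_zero_iff]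
  refine squeeze_zero_norm' ?_
    ((tendsto_const_nhds (x := (K : ℝ))).div_atTop tendsto_natCast_atTop_atTop)
  filter_upwards [eventually_gt_atTop 0] with n hn
  have hn' : (0 : ℝ) < n := by exact_mod_cast hn
  set p : ℕ → ℝ := fun i => i / n with hp
  have hstep : ∀ i, p (i + 1) - p i = (n : ℝ)⁻¹ := fun i => by simp only [hp]; push_cast; ring
  have hcell : ∀ i ∈ range n, Ioc (p i) (p (i + 1)) ⊆ Ioc 0 1 := fun i hi => by
    refine Ioc_subset_Ioc (by positivity) ?_
    simpa [hp] using (add_one_div_mem_Ioc (mem_range.1 hi)).2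
  have hsplit : ∫ x in (0 : ℝ)..1, w x = ∑ i ∈ range n, ∫ x in p i..p (i + 1), w x := by
    rw [intervalIntegral.sum_integral_adjacent_intervals fun i hi =>
      (intervalIntegrable_iff_integrableOn_Ioc_of_le (by linarith [hstep i, inv_pos.2 hn'])).2
        ((hw.mono (hcell i (mem_range.2 hi))).integrableOn_Ioc)]
    simp [hp, hn'.ne']
  calc ‖(n : ℝ)⁻¹ * ∑ i ∈ range n, w (((i : ℝ) + 1) / n) - ∫ x in (0 : ℝ)..1, w x‖
      = |∑ i ∈ range n, ((p (i + 1) - p i) * w (p (i + 1)) - ∫ x in p i..p (i + 1), w x)| := by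
        rw [sum_sub_distrib, hsplit, Real.norm_eq_abs]
        simp only [hstep]
        rw [← mul_sum]
        simp only [hp, Nat.cast_add_one]
    _ ≤ ∑ i ∈ range n, |(p (i + 1) - p i) * w (p (i + 1)) - ∫ x in p i..p (i + 1), w x| :=
        abs_sum_le_sum_abs _ _
    _ ≤ ∑ i ∈ range n, K * (p (i + 1) - p i) ^ 2 := sum_le_sum fun i hi =>
        hw.abs_sub_integral_le (by linarith [hstep i, inv_pos.2 hn']) (hcell i hi)
    _ = K / n := by simp only [hstep, sum_const, card_range, nsmul_eq_mul]; field_simp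

theorem abs_sum_mul_le_of_abs_sub_le (f Z : ℕ → ℝ) (n : ℕ) {C : ℝ} (hC : 0 ≤ C)
    (hf : ∀ i, i + 1 < n → |f (i + 1) - f i| ≤ C) :
    |∑ i ∈ range n, f i * Z i|
      ≤ |f (n - 1)| * |∑ i ∈ range n, Z i| + C * ∑ k ∈ range n, |∑ i ∈ range k, Z i| := by
  set S : ℕ → ℝ := fun k => ∑ i ∈ range k, Z i
  have hparts := sum_range_by_parts f Z n
  simp only [smul_eq_mul] at hparts
  rw [hparts, ← abs_mul]
  refine (abs_sub _ _).trans (add_le_add le_rfl ?_)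
  calc |∑ i ∈ range (n - 1), (f (i + 1) - f i) * S (i + 1)|
      ≤ ∑ i ∈ range (n - 1), C * |S (i + 1)| := by
        refine (abs_sum_le_sum_abs _ _).trans (sum_le_sum fun i hi => ?_)
        rw [abs_mul]
        gcongr
        exact hf i (by have := mem_range.1 hi; omega)
    _ ≤ C * ∑ k ∈ range n, |S k| := by
        rw [← mul_sum]
        gcongr
        rcases n with _ | n
        · simp
        · rw [sum_range_succ' _ n, Nat.add_sub_cancel]
          linarith [abs_nonneg (S 0)]

theorem tendsto_inv_mul_sum_mul_of_tendsto_zero (f : ℕ → ℕ → ℝ) (Z : ℕ → ℝ) {B K : ℝ}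
    (hK : 0 ≤ K) (hZ : Tendsto (fun n : ℕ => (n : ℝ)⁻¹ * ∑ i ∈ range n, Z i) atTop (𝓝 0))
    (hB : ∀ᶠ n in atTop, |f n (n - 1)| ≤ B)
    (hf : ∀ n i, i + 1 < n → |f n (i + 1) - f n i| ≤ K / n) :
    Tendsto (fun n : ℕ => (n : ℝ)⁻¹ * ∑ i ∈ range n, f n i * Z i) atTop (𝓝 0) := by
  set S : ℕ → ℝ := fun k => ∑ i ∈ range k, Z i
  set a : ℕ → ℝ := fun k => |S k| / k
  have ha : Tendsto a atTop (𝓝 0) := by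
    simpa only [inv_mul_eq_div, abs_div, Nat.abs_cast, abs_zero] using hZ.abs
  refine squeeze_zero_norm' ?_ (by simpa using (ha.const_mul B).add (ha.cesaro.const_mul K))
  filter_upwards [hB, eventually_gt_atTop 0] with n hBn hn
  have hn' : (0 : ℝ) < n := by exact_mod_cast hn
  have hSa : ∀ k ∈ range n, |S k| / n ≤ a k := by
    intro k hk
    rcases Nat.eq_zero_or_pos k with rfl | hk0
    · simp [S, a]
    simp only [a]
    gcongr
    exact (mem_range.1 hk).le
  calc ‖(n : ℝ)⁻¹ * ∑ i ∈ range n, f n i * Z i‖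
      = (n : ℝ)⁻¹ * |∑ i ∈ range n, f n i * Z i| := by
        rw [Real.norm_eq_abs, abs_mul, abs_inv, Nat.abs_cast]
    _ ≤ (n : ℝ)⁻¹ * (|f n (n - 1)| * |S n| + K / n * ∑ k ∈ range n, |S k|) := by
        gcongr
        exact abs_sum_mul_le_of_abs_sub_le (f n) Z n (by positivity) (hf n)
    _ = |f n (n - 1)| * a n + K * ((n : ℝ)⁻¹ * ∑ k ∈ range n, |S k| / n) := by
        simp only [a, ← sum_div]
        ring
    _ ≤ B * a n + K * ((n : ℝ)⁻¹ * ∑ k ∈ range n, a k) := by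
        gcongr with k hk
        exact hSa k hk

theorem LipschitzOnWith.tendsto_inv_mul_sum_mul {K : ℝ≥0} {w : ℝ → ℝ}
    (hw : LipschitzOnWith K w (Ioc 0 1)) {Y : ℕ → ℝ} {m : ℝ}
    (hY : Tendsto (fun n : ℕ => (n : ℝ)⁻¹ * ∑ i ∈ range n, Y i) atTop (𝓝 m)) :
    Tendsto (fun n : ℕ => (n : ℝ)⁻¹ * ∑ i ∈ range n, w (((i : ℝ) + 1) / n) * Y i) atTop
      (𝓝 (m * ∫ r in Ioc 0 1, w r)) := by
  have hcentered : Tendsto (fun n : ℕ => (n : ℝ)⁻¹ * ∑ i ∈ range n, (Y i - m)) atTop (𝓝 0) := by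
    refine (tendsto_sub_nhds_zero_iff.2 hY).congr' ?_
    filter_upwards [eventually_gt_atTop 0] with n hn
    rw [sum_sub_distrib, sum_const, card_range, nsmul_eq_mul, mul_sub, inv_mul_cancel_left₀]
    exact_mod_cast hn.ne'
  have hlast : ∀ᶠ n : ℕ in atTop, |w ((((n - 1 : ℕ) : ℝ) + 1) / n)| ≤ |w 1| := by
    filter_upwards [eventually_gt_atTop 0] with n hn
    rw [Nat.cast_sub hn, Nat.cast_one, sub_add_cancel, div_self (by exact_mod_cast hn.ne')]
  have hincr : ∀ n i : ℕ, i + 1 < n →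
      |w ((((i + 1 : ℕ) : ℝ) + 1) / n) - w (((i : ℝ) + 1) / n)| ≤ K / n := by
    intro n i hi
    have hn : (0 : ℝ) < n := by exact_mod_cast (Nat.zero_le _).trans_lt hi
    rw [← Real.dist_eq]
    refine (hw.dist_le_mul _ (add_one_div_mem_Ioc hi) _
      (add_one_div_mem_Ioc (by omega : i < n))).trans_eq ?_
    have hstep : (((i + 1 : ℕ) : ℝ) + 1) / n - ((i : ℝ) + 1) / n = 1 / n := by
      push_cast; ring
    rw [Real.dist_eq, hstep, abs_of_pos (by positivity), mul_one_div]
  have herror := tendsto_inv_mul_sum_mul_of_tendsto_zero (fun n i => w (((i : ℝ) + 1) / n))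
    (fun i => Y i - m) K.coe_nonneg hcentered hlast hincr
  have hsum := (hw.tendsto_riemann_sum.const_mul m).add herror
  rw [add_zero] at hsum
  refine hsum.congr fun n => ?_
  simp only [mul_sub, sum_sub_distrib, ← sum_mul]
  ring

theorem fourth_moment_partial_sum_lln_general
    {Ω : Type*} [MeasureSpace Ω] [IsProbabilityMeasure (ℙ : Measure Ω)]
    (ε : ℕ → Ω → ℝ) (hmeas : ∀ t, Measurable (ε t))
    (hindep : iIndepFun ε ℙ)
    (hid : ∀ t, IdentDistrib (ε t) (ε 1) ℙ ℙ)
    (hmom4 : Integrable (fun ω => (ε 1 ω) ^ 4) ℙ)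
    (g : ℝ → ℝ)
    (hg_lip : ∃ K, LipschitzOnWith K g (Set.Ioc (0:ℝ) 1)) :
    TendstoInMeasure ℙ
      (fun (n : ℕ) ω => (n : ℝ)⁻¹ *
        ∑ t ∈ Finset.Icc 1 n, (g ((t : ℝ) / n) * ε t ω) ^ 4)
      atTop
      (fun _ => (∫ ω, (ε 1 ω) ^ 4 ∂ℙ) * ∫ r in Set.Ioc (0:ℝ) 1, (g r) ^ 4) := by
  obtain ⟨K, hK⟩ := hg_lip
  have hg_bdd : ∀ r ∈ Ioc (0 : ℝ) 1, ‖g r‖ ≤ ↑(‖g 1‖₊ + K) := fun r hr => by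
    refine (hK.norm_le_add_mul_dist ⟨one_pos, le_rfl⟩ hr).trans ?_
    have : dist r 1 ≤ 1 := by rw [Real.dist_eq, abs_of_nonpos (by linarith [hr.2])]; linarith [hr.1]
    push_cast
    gcongr
    exact mul_le_of_le_one_right K.coe_nonneg this
  have hw := hK.pow_of_norm_le hg_bdd 4
  have hp4 : Measurable fun x : ℝ => x ^ 4 := measurable_id.pow_const 4
  have hslln := strong_law_ae_real (fun i ω => ε (i + 1) ω ^ 4) hmom4
    (fun i j hij => (hindep.indepFun (by simpa using hij)).comp hp4 hp4)
    (fun i => (hid (i + 1)).comp hp4)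
  refine tendstoInMeasure_of_tendsto_ae (fun n => by fun_prop) ?_
  filter_upwards [hslln] with ω hω
  refine (hw.tendsto_inv_mul_sum_mul (by simpa only [div_eq_inv_mul] using hω)).congr fun n => ?_
  rw [← Finset.Ico_add_one_right_eq_Icc, sum_Ico_eq_sum_range, Nat.add_sub_cancel]
  refine congrArg _ (sum_congr rfl fun i _ => ?_)
  rw [add_comm 1 i, mul_pow, Nat.cast_add_one]

/-- Under Assumption A1, `n⁻¹ ∑_{t=1}^{n} u_t⁴` (with `u_t = g(t/n) ε_t`)
converges in probability to `E[ε₁⁴] ⬝ ∫_0^1 g(r)⁴ dr`. -/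
theorem fourth_moment_partial_sum_lln
    {Ω : Type*} [MeasureSpace Ω] [IsProbabilityMeasure (ℙ : Measure Ω)]
    (ε : ℕ → Ω → ℝ) (hmeas : ∀ t, Measurable (ε t))
    (hindep : iIndepFun ε ℙ)
    (hid : ∀ t, IdentDistrib (ε t) (ε 1) ℙ ℙ)
    (hvar : ∫ ω, (ε 1 ω) ^ 2 ∂ℙ = 1)
    (hmom4 : Integrable (fun ω => (ε 1 ω) ^ 4) ℙ)
    (g : ℝ → ℝ)
    (hg_pos : ∀ r ∈ Set.Ioc (0:ℝ) 1, 0 < g r)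
    (hg_bdd : ∃ M, ∀ r ∈ Set.Ioc (0:ℝ) 1, |g r| ≤ M)
    (hg_lip : ∃ K, LipschitzOnWith K g (Set.Ioc (0:ℝ) 1)) :
    TendstoInMeasure ℙ
      (fun (n : ℕ) ω => (n : ℝ)⁻¹ *
        ∑ t ∈ Finset.Icc 1 n, (g ((t : ℝ) / n) * ε t ω) ^ 4)
      atTop
      (fun _ => (∫ ω, (ε 1 ω) ^ 4 ∂ℙ) * ∫ r in Set.Ioc (0:ℝ) 1, (g r) ^ 4) :=
  fourth_moment_partial_sum_lln_general ε hmeas hindep hid hmom4 g hg_lip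
end

section
/- (Asymptotic-equivalence content of Proposition 4.) Assume E[ε_1⁴] > 1. Let w_{t,n}, t = a_n+1, …, a_n+q, be random weights such that q^{1/2} · max_t | w_{t,n} − 1 | converges in probability to 0. Define the corrected statistic pieces C̄_k = Σ_{t=a_n+1}^{a_n+k} w_{t,n} ε_t², η̄_n = (1/q) Σ_{t=a_n+1}^{a_n+q} w_{t,n}² ε_t⁴, B̄_k = ( C̄_k − (k/q) C̄_q ) / √( η̄_n − ( q^{-1} C̄_q )² ), and the uncorrected pieces C_k = Σ_{t=a_n+1}^{a_n+k} ε_t², η_n = (1/q) Σ_{t=a_n+1}^{a_n+q} ε_t⁴, B_k = ( C_k − (k/q) C_q ) / √( η_n − ( q^{-1} C_q )² ). Then max_{1≤k≤q} | q^{-1/2} B̄_k − q^{-1/2} B_k | converges in probability to 0 as n → ∞. -/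
/-!
Put `x t = ε t ^ 2`. The corrected statistic is the same self-normalised CUSUM functional applied
to `w t * x t`, and `|w t * x t - x t| ≤ d * x t` with `d = max_t |w t - 1|`. Such a relative
perturbation moves every partial sum `C_k` by at most `d * C_q` and the normaliser
`η - (C_q / q) ^ 2` by `O(d)`; while the normaliser stays away from zero, the CUSUM statistics move
by `O(q d)`, so `q^{-1/2} (B̄_k - B_k) = O(q^{1/2} d)` uniformly in `k`. On the sliding window the
block sums have the law of the initial block sums, so the strong law gives `C_q / q → 1` and
`η → E ε⁴` in probability; the normaliser therefore tends to `E ε⁴ - 1 > 0`, while `q^{1/2} d → 0`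
in probability by assumption.
-/

open MeasureTheory ProbabilityTheory Filter Topology

noncomputable def windowSum (x : ℕ → ℝ) (a k : ℕ) : ℝ := ∑ t ∈ Finset.Icc (a + 1) (a + k), x t

noncomputable def windowMean (x : ℕ → ℝ) (a q : ℕ) : ℝ := (q : ℝ)⁻¹ * windowSum x a q

/-- `B` is `cusum (ε · ^ 2)` and `B̄` is `cusum (w · * ε · ^ 2)`, because `(w ε²)² = w² ε⁴`. -/
noncomputable def cusum (x : ℕ → ℝ) (a q k : ℕ) : ℝ :=
  (windowSum x a k - (k : ℝ) / q * windowSum x a q) /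
    √(windowMean (fun t => x t ^ 2) a q - windowMean x a q ^ 2)

lemma windowSum_eq_sum_range (x : ℕ → ℝ) (a k : ℕ) :
    windowSum x a k = ∑ i ∈ Finset.range k, x (a + 1 + i) := by
  rw [windowSum, ← Finset.Ico_add_one_right_eq_Icc, Finset.sum_Ico_eq_sum_range,
    show a + k + 1 - (a + 1) = k by omega]

lemma le_ciSup₂_of_mem_finset {ι : Type*} {s : Finset ι} (f : ι → ℝ) {i : ι} (hi : i ∈ s) :
    f i ≤ ⨆ j ∈ s, f j :=
  le_ciSup₂ (f := fun j (_ : j ∈ s) => f j)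
    ((s.finite_toSet.image f).bddAbove.mono
      (Set.iUnion_subset fun _ => Set.range_subset_iff.2 fun hj => Set.mem_image_of_mem f hj)) i hi

lemma abs_mul_sub_le_biSup_mul {ι : Type*} {s : Finset ι} {w x : ι → ℝ} {t : ι} (ht : t ∈ s)
    (hx : 0 ≤ x t) : |w t * x t - x t| ≤ (⨆ j ∈ s, |w j - 1|) * x t := by
  rw [← sub_one_mul, abs_mul, abs_of_nonneg hx]
  exact mul_le_mul_of_nonneg_right (le_ciSup₂_of_mem_finset (fun j => |w j - 1|) ht) hx

lemma biSup_abs_nonneg {ι : Type*} (s : Finset ι) (f : ι → ℝ) : 0 ≤ ⨆ i ∈ s, |f i| :=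
  Real.iSup_nonneg fun _ => Real.iSup_nonneg fun _ => abs_nonneg _

lemma abs_div_sqrt_sub_div_sqrt_le {N N' D D' c : ℝ} (hc : 0 < c) (hD : c ≤ D) (hD' : c ≤ D') :
    |N' / √D' - N / √D| ≤ |N' - N| / √c + |N| * |D' - D| / (2 * c * √c) := by
  have hs : 0 < √c := Real.sqrt_pos.2 hc
  have hu : √c ≤ √D := Real.sqrt_le_sqrt hD
  have hu' : √c ≤ √D' := Real.sqrt_le_sqrt hD'
  have hsqrt : |√D - √D'| ≤ |D' - D| / (2 * √c) := by
    have hdiff : (√D - √D') * (√D + √D') = D - D' := by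
      linear_combination Real.mul_self_sqrt (hc.le.trans hD) -
        Real.mul_self_sqrt (hc.le.trans hD')
    rw [le_div_iff₀ (by positivity), abs_sub_comm D', ← hdiff, abs_mul,
      abs_of_pos (by linarith : 0 < √D + √D')]
    gcongr
    linarith
  have hsplit : N' / √D' - N / √D = (N' - N) / √D' + N * (√D - √D') / (√D' * √D) := by
    have := (hs.trans_le hu).ne'
    have := (hs.trans_le hu').ne'
    field_simp
    ring
  rw [hsplit]
  refine (abs_add_le _ _).trans (add_le_add ?_ ?_)
  · rw [abs_div, abs_of_pos (hs.trans_le hu')]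
    gcongr
  · rw [abs_div, abs_mul, abs_of_pos (mul_pos (hs.trans_le hu') (hs.trans_le hu)),
      show 2 * c * √c = √c * √c * (2 * √c) by rw [Real.mul_self_sqrt hc.le]; ring]
    calc |N| * |√D - √D'| / (√D' * √D) ≤ |N| * (|D' - D| / (2 * √c)) / (√c * √c) := by gcongr
      _ = |N| * |D' - D| / (√c * √c * (2 * √c)) := by field_simp

section Perturbation

variable {x x' : ℕ → ℝ} {a : ℕ} {d : ℝ}

lemma windowSum_le_windowSum {k l : ℕ} (hkl : k ≤ l)
    (hx : ∀ t ∈ Finset.Icc (a + 1) (a + l), 0 ≤ x t) : windowSum x a k ≤ windowSum x a l :=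
  Finset.sum_le_sum_of_subset_of_nonneg (Finset.Icc_subset_Icc_right (by omega))
    fun t ht _ => hx t ht

lemma abs_windowSum_sub_le {k : ℕ} (h : ∀ t ∈ Finset.Icc (a + 1) (a + k), |x' t - x t| ≤ d * x t) :
    |windowSum x' a k - windowSum x a k| ≤ d * windowSum x a k := by
  rw [windowSum, windowSum, ← Finset.sum_sub_distrib, Finset.mul_sum]
  exact (Finset.abs_sum_le_sum_abs _ _).trans (Finset.sum_le_sum h)

lemma abs_windowMean_sub_le {q : ℕ}
    (h : ∀ t ∈ Finset.Icc (a + 1) (a + q), |x' t - x t| ≤ d * x t) :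
    |windowMean x' a q - windowMean x a q| ≤ d * windowMean x a q := by
  rw [windowMean, windowMean, ← mul_sub, abs_mul, abs_of_nonneg (by positivity), mul_left_comm]
  exact mul_le_mul_of_nonneg_left (abs_windowSum_sub_le h) (by positivity)

lemma abs_sq_sub_sq_le {u v : ℝ} (hv : 0 ≤ v) (hd : d ≤ 1) (h : |u - v| ≤ d * v) :
    |u ^ 2 - v ^ 2| ≤ 3 * d * v ^ 2 := by
  have hsum : |u + v| ≤ 3 * v := by
    calc |u + v| = |(u - v) + 2 * v| := by ring_nf
      _ ≤ |u - v| + |2 * v| := abs_add_le _ _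
      _ ≤ 3 * v := by
        rw [abs_of_nonneg (by linarith : 0 ≤ 2 * v)]
        linarith [mul_le_of_le_one_left hv hd]
  calc |u ^ 2 - v ^ 2| = |u - v| * |u + v| := by rw [← abs_mul]; ring_nf
    _ ≤ d * v * (3 * v) := mul_le_mul h hsum (abs_nonneg _) ((abs_nonneg _).trans h)
    _ = 3 * d * v ^ 2 := by ring

lemma abs_cusum_sub_cusum_le {q k : ℕ} {c : ℝ} (hk : k ≤ q)
    (hx : ∀ t ∈ Finset.Icc (a + 1) (a + q), 0 ≤ x t) (hd0 : 0 ≤ d) (hd1 : d ≤ 1)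
    (hxx' : ∀ t ∈ Finset.Icc (a + 1) (a + q), |x' t - x t| ≤ d * x t) (hc : 0 < c)
    (hD : 2 * c ≤ windowMean (fun t => x t ^ 2) a q - windowMean x a q ^ 2)
    (hdc : 3 * d * (windowMean (fun t => x t ^ 2) a q + windowMean x a q ^ 2) ≤ c) :
    |cusum x' a q k - cusum x a q k| ≤ d * windowSum x a q *
      (2 / √c + 3 * (windowMean (fun t => x t ^ 2) a q + windowMean x a q ^ 2) / (2 * c * √c)) := by
  set S := windowSum x a q
  set X := windowMean x a q
  set Y := windowMean (fun t => x t ^ 2) a q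
  have hwin : Finset.Icc (a + 1) (a + k) ⊆ Finset.Icc (a + 1) (a + q) :=
    Finset.Icc_subset_Icc_right (by omega)
  have hS : 0 ≤ S := Finset.sum_nonneg hx
  have hAk : 0 ≤ windowSum x a k := Finset.sum_nonneg fun t ht => hx t (hwin ht)
  have hAkS : windowSum x a k ≤ S := windowSum_le_windowSum hk hx
  have hr0 : (0 : ℝ) ≤ k / q := by positivity
  have hr1 : (k : ℝ) / q ≤ 1 := div_le_one_of_le₀ (by exact_mod_cast hk) (by positivity)
  have hN : |windowSum x a k - k / q * S| ≤ S := by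
    rw [abs_le]
    constructor <;> nlinarith
  have hNN' : |(windowSum x' a k - k / q * windowSum x' a q) - (windowSum x a k - k / q * S)|
      ≤ 2 * d * S := by
    have hAk' := abs_windowSum_sub_le fun t ht => hxx' t (hwin ht)
    have hS' : |windowSum x' a q - S| ≤ d * S := abs_windowSum_sub_le hxx'
    calc _ = |(windowSum x' a k - windowSum x a k) - k / q * (windowSum x' a q - S)| := by ring_nf
      _ ≤ |windowSum x' a k - windowSum x a k| + k / q * |windowSum x' a q - S| := by
        rw [← abs_of_nonneg hr0, ← abs_mul, abs_of_nonneg hr0]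
        exact abs_sub _ _
      _ ≤ d * S + 1 * (d * S) := by gcongr; exact hAk'.trans (by gcongr)
      _ = 2 * d * S := by ring
  have hX : 0 ≤ X := mul_nonneg (by positivity) hS
  have hY : |windowMean (fun t => x' t ^ 2) a q - Y| ≤ 3 * d * Y :=
    abs_windowMean_sub_le fun t ht => abs_sq_sub_sq_le (hx t ht) hd1 (hxx' t ht)
  have hX2 : |windowMean x' a q ^ 2 - X ^ 2| ≤ 3 * d * X ^ 2 :=
    abs_sq_sub_sq_le hX hd1 (abs_windowMean_sub_le hxx')
  have hDD' : |(windowMean (fun t => x' t ^ 2) a q - windowMean x' a q ^ 2) - (Y - X ^ 2)|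
      ≤ 3 * d * (Y + X ^ 2) := by
    calc _ = |(windowMean (fun t => x' t ^ 2) a q - Y) - (windowMean x' a q ^ 2 - X ^ 2)| := by
          ring_nf
      _ ≤ 3 * d * Y + 3 * d * X ^ 2 := (abs_sub _ _).trans (add_le_add hY hX2)
      _ = 3 * d * (Y + X ^ 2) := by ring
  have hD' : c ≤ windowMean (fun t => x' t ^ 2) a q - windowMean x' a q ^ 2 := by
    linarith [(abs_le.1 hDD').1]
  calc |cusum x' a q k - cusum x a q k|
      ≤ _ := abs_div_sqrt_sub_div_sqrt_le hc (by linarith) hD'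
    _ ≤ 2 * d * S / √c + S * (3 * d * (Y + X ^ 2)) / (2 * c * √c) := by gcongr
    _ = _ := by ring

lemma abs_inv_sqrt_mul_cusum_sub_le {q k : ℕ} {c : ℝ} (hk : k ≤ q)
    (hx : ∀ t ∈ Finset.Icc (a + 1) (a + q), 0 ≤ x t) (hd0 : 0 ≤ d) (hd1 : d ≤ 1)
    (hxx' : ∀ t ∈ Finset.Icc (a + 1) (a + q), |x' t - x t| ≤ d * x t) (hc : 0 < c)
    (hD : 2 * c ≤ windowMean (fun t => x t ^ 2) a q - windowMean x a q ^ 2)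
    (hdc : 3 * d * (windowMean (fun t => x t ^ 2) a q + windowMean x a q ^ 2) ≤ c) :
    |(√q)⁻¹ * cusum x' a q k - (√q)⁻¹ * cusum x a q k| ≤
      √q * d * (windowMean x a q * (2 / √c +
        3 * (windowMean (fun t => x t ^ 2) a q + windowMean x a q ^ 2) / (2 * c * √c))) := by
  have hq : (q : ℝ) ≠ 0 := by
    rintro hq
    simp only [windowMean, hq, inv_zero, zero_mul] at hD
    linarith
  have hSX : windowSum x a q = q * windowMean x a q := (mul_inv_cancel_left₀ hq _).symm
  have hsqrt : (√q)⁻¹ * q = √q := by rw [← div_eq_inv_mul, Real.div_sqrt]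
  have hcusum := abs_cusum_sub_cusum_le hk hx hd0 hd1 hxx' hc hD hdc
  set B := 2 / √c +
    3 * (windowMean (fun t => x t ^ 2) a q + windowMean x a q ^ 2) / (2 * c * √c)
  rw [← mul_sub, abs_mul, abs_inv, abs_of_nonneg (Real.sqrt_nonneg _)]
  calc _ ≤ (√q)⁻¹ * (d * windowSum x a q * B) := by gcongr
    _ = (√q)⁻¹ * q * d * (windowMean x a q * B) := by rw [hSX]; ring
    _ = _ := by rw [hsqrt]

end Perturbation

lemma exists_iSup_abs_cusum_mul_sub_le {m : ℝ} (hm : 1 < m) :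
    ∃ θ > 0, ∃ K > 0, ∀ (x w : ℕ → ℝ) (a q : ℕ), 1 ≤ q →
      (∀ t ∈ Finset.Icc (a + 1) (a + q), 0 ≤ x t) →
      √q * (⨆ t ∈ Finset.Icc (a + 1) (a + q), |w t - 1|) < θ →
      |windowMean x a q - 1| < θ → |windowMean (fun t => x t ^ 2) a q - m| < θ →
      ⨆ k ∈ Finset.Icc 1 q,
          |(√q)⁻¹ * cusum (fun t => w t * x t) a q k - (√q)⁻¹ * cusum x a q k| ≤
        K * (√q * ⨆ t ∈ Finset.Icc (a + 1) (a + q), |w t - 1|) := by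
  -- The normaliser `windowMean (x ^ 2) - windowMean x ^ 2` tends to `m - 1 = 4 * c`; near the
  -- limit it stays above `2 * c`, and above `c` after the perturbation.
  set c := (m - 1) / 4 with hc_def
  have hc : 0 < c := by positivity
  set L := 2 / √c + 3 * (m + 5) / (2 * c * √c)
  refine ⟨min 1 ((m - 1) / (12 * (m + 5))), lt_min one_pos (by positivity), 2 * L,
    by positivity, ?_⟩
  intro x w a q hq hx hqd hXm hYm
  set θ := min 1 ((m - 1) / (12 * (m + 5)))
  set d := ⨆ t ∈ Finset.Icc (a + 1) (a + q), |w t - 1|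
  set X := windowMean x a q
  set Y := windowMean (fun t => x t ^ 2) a q
  have hd0 : 0 ≤ d := biSup_abs_nonneg _ _
  have hθ1 : θ ≤ 1 := min_le_left _ _
  have hθm : θ * (12 * (m + 5)) ≤ m - 1 := (le_div_iff₀ (by positivity)).1 (min_le_right _ _)
  have hsq : 1 ≤ √(q : ℝ) := Real.one_le_sqrt.2 (by exact_mod_cast hq)
  have hdθ : d < θ := (le_mul_of_one_le_left hd0 hsq).trans_lt hqd
  obtain ⟨hX1, hX2⟩ := abs_lt.1 hXm
  obtain ⟨hY1, hY2⟩ := abs_lt.1 hYm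
  have hXsq : X ^ 2 ≤ 1 + 3 * θ := by nlinarith
  have hD : 2 * c ≤ Y - X ^ 2 := by nlinarith
  have hdc : 3 * d * (Y + X ^ 2) ≤ c := by nlinarith
  have hL : X * (2 / √c + 3 * (Y + X ^ 2) / (2 * c * √c)) ≤ 2 * L := by
    have hYX : Y + X ^ 2 ≤ m + 5 := by linarith
    have hYX0 : 0 ≤ Y + X ^ 2 := by nlinarith
    refine mul_le_mul (by linarith) ?_ (by positivity) zero_le_two
    show _ ≤ 2 / √c + 3 * (m + 5) / (2 * c * √c)
    gcongr
  have hbound : 0 ≤ 2 * L * (√q * d) := by positivity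
  refine Real.iSup_le (fun k => Real.iSup_le (fun hk => ?_) hbound) hbound
  calc _ ≤ √q * d * (X * (2 / √c + 3 * (Y + X ^ 2) / (2 * c * √c))) :=
        abs_inv_sqrt_mul_cusum_sub_le (Finset.mem_Icc.1 hk).2 hx hd0 (hdθ.le.trans hθ1)
          (fun t ht => abs_mul_sub_le_biSup_mul ht (hx t ht)) hc hD hdc
    _ ≤ √q * d * (2 * L) := by gcongr
    _ = 2 * L * (√q * d) := by ring

lemma tendsto_nat_floor_rpow_atTop {γ : ℝ} (hγ : 0 < γ) :
    Tendsto (fun n : ℕ => ⌊(n : ℝ) ^ γ⌋₊) atTop atTop :=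
  tendsto_nat_floor_atTop.comp ((tendsto_rpow_atTop hγ).comp tendsto_natCast_atTop_atTop)

section Probability

variable {Ω ι : Type*} [MeasurableSpace Ω] {μ : Measure Ω}

lemma ProbabilityTheory.iIndepFun.identDistrib_comp_injective [IsProbabilityMeasure μ]
    {κ β : Type*} [MeasurableSpace β] {Y : ι → Ω → β} (hmeas : ∀ i, Measurable (Y i))
    (hindep : iIndepFun Y μ) {j : ι} (hid : ∀ i, IdentDistrib (Y i) (Y j) μ μ) {g h : κ → ι}
    (hg : g.Injective) (hh : h.Injective) :
    IdentDistrib (fun ω k => Y (g k) ω) (fun ω k => Y (h k) ω) μ μ := by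
  have hlaw : ∀ {g : κ → ι}, g.Injective →
      μ.map (fun ω k => Y (g k) ω) = Measure.infinitePi (fun _ => μ.map (Y j)) := by
    intro g hg
    rw [(hindep.precomp hg).map_fun_eq_infinitePi_map fun k => hmeas (g k)]
    simp_rw [fun k => (hid (g k)).map_eq]
  exact ⟨(measurable_pi_lambda _ fun k => hmeas (g k)).aemeasurable,
    (measurable_pi_lambda _ fun k => hmeas (h k)).aemeasurable, by rw [hlaw hg, hlaw hh]⟩

lemma MeasureTheory.TendstoInMeasure.congr_identDistrib {E : Type*} [PseudoMetricSpace E]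
    [MeasurableSpace E] [OpensMeasurableSpace E] {f f' : ι → Ω → E} {l : Filter ι} {c : E}
    (h : TendstoInMeasure μ f l (fun _ => c)) (hff' : ∀ i, IdentDistrib (f' i) (f i) μ μ) :
    TendstoInMeasure μ f' l (fun _ => c) := by
  rw [tendstoInMeasure_iff_dist] at h ⊢
  refine fun δ hδ => (h δ hδ).congr fun i => ?_
  exact ((hff' i).measure_mem_eq (s := {y | δ ≤ dist y c})
    (isClosed_le continuous_const (continuous_id.dist continuous_const)).measurableSet).symm

theorem tendstoInMeasure_windowMean [IsProbabilityMeasure μ] {Y : ℕ → Ω → ℝ}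
    (hmeas : ∀ t, Measurable (Y t)) (hindep : iIndepFun Y μ) {j : ℕ}
    (hid : ∀ t, IdentDistrib (Y t) (Y j) μ μ) (hint : Integrable (Y j) μ) (a : ℕ → ℕ)
    {q : ℕ → ℕ} (hq : Tendsto q atTop atTop) :
    TendstoInMeasure μ (fun n ω => windowMean (Y · ω) (a n) (q n)) atTop (fun _ => μ[Y j]) := by
  set average : ℕ → (ℕ → ℝ) → ℝ := fun N z => (N : ℝ)⁻¹ * ∑ i ∈ Finset.range N, z i
  have hslln := strong_law_ae_real Y ((hid 0).integrable_iff.2 hint)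
    (fun s t hst => hindep.indepFun hst) fun t => (hid t).trans (hid 0).symm
  rw [(hid 0).integral_eq] at hslln
  have hinit : TendstoInMeasure μ (fun n ω => average (q n) (Y · ω)) atTop (fun _ => μ[Y j]) := by
    refine tendstoInMeasure_of_tendsto_ae (fun n => ?_) ?_
    · exact (measurable_const.mul (Finset.measurable_sum _ fun i _ => hmeas i)).aestronglyMeasurable
    · filter_upwards [hslln] with ω hω
      simpa only [average, div_eq_inv_mul, Function.comp_def] using hω.comp hq
  refine hinit.congr_identDistrib fun n => ?_
  have hshift := hindep.identDistrib_comp_injective hmeas hid (add_right_injective (a n + 1))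
    Function.injective_id
  have haverage : Measurable (average (q n)) :=
    measurable_const.mul (Finset.measurable_sum _ fun i _ => measurable_pi_apply i)
  simpa only [windowMean, windowSum_eq_sum_range, average, Function.comp_def, id] using
    hshift.comp haverage

lemma MeasureTheory.TendstoInMeasure.tendsto_measure_compl_setOf_dist_lt {E : Type*}
    [PseudoMetricSpace E] {f : ι → Ω → E} {l : Filter ι} {g : Ω → E}
    (h : TendstoInMeasure μ f l g) {θ : ℝ} (hθ : 0 < θ) :
    Tendsto (fun i => μ {ω | dist (f i ω) (g ω) < θ}ᶜ) l (𝓝 0) := by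
  simpa only [Set.compl_ofPred, not_lt] using tendstoInMeasure_iff_dist.1 h θ hθ

lemma tendsto_measure_compl_inter {s t : ι → Set Ω} {l : Filter ι}
    (hs : Tendsto (fun i => μ (s i)ᶜ) l (𝓝 0)) (ht : Tendsto (fun i => μ (t i)ᶜ) l (𝓝 0)) :
    Tendsto (fun i => μ (s i ∩ t i)ᶜ) l (𝓝 0) := by
  refine tendsto_of_tendsto_of_tendsto_of_le_of_le tendsto_const_nhds
    (by simpa using hs.add ht) (fun i => zero_le) fun i => ?_
  rw [Set.compl_inter]
  exact measure_union_le _ _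

lemma tendstoInMeasure_zero_of_norm_le_mul {E F : Type*} [SeminormedAddCommGroup E]
    [SeminormedAddCommGroup F] {f : ι → Ω → E} {u : ι → Ω → F} {G : ι → Set Ω} {l : Filter ι}
    {K : ℝ} (hK : 0 < K) (hu : TendstoInMeasure μ u l (fun _ => 0))
    (hG : Tendsto (fun i => μ (G i)ᶜ) l (𝓝 0))
    (hfu : ∀ᶠ i in l, ∀ ω ∈ G i, ‖f i ω‖ ≤ K * ‖u i ω‖) :
    TendstoInMeasure μ f l (fun _ => 0) := by
  rw [tendstoInMeasure_iff_norm] at hu ⊢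
  intro δ hδ
  refine tendsto_of_tendsto_of_tendsto_of_le_of_le' tendsto_const_nhds
    (by simpa using hG.add (hu (δ / K) (div_pos hδ hK))) (Eventually.of_forall fun i => zero_le) ?_
  filter_upwards [hfu] with i hi
  refine (measure_mono fun ω hω => ?_).trans (measure_union_le _ _)
  by_cases hωG : ω ∈ G i
  · right
    simp only [Set.mem_ofPred_eq, sub_zero] at hω ⊢
    rw [div_le_iff₀' hK]
    exact hω.trans (hi ω hωG)
  · exact Or.inl hωG

lemma integrable_sq_of_integrable_pow_four [IsFiniteMeasure μ] {X : Ω → ℝ}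
    (hX : AEStronglyMeasurable X μ) (h4 : Integrable (fun ω => X ω ^ 4) μ) :
    Integrable (fun ω => X ω ^ 2) μ := by
  refine (h4.add (integrable_const 1)).mono' (hX.pow 2) (ae_of_all _ fun ω => ?_)
  rw [Real.norm_eq_abs, abs_of_nonneg (sq_nonneg _)]
  show X ω ^ 2 ≤ X ω ^ 4 + 1
  nlinarith [sq_nonneg (X ω ^ 2 - 1)]

end Probability

theorem corrected_cusum_asymptotic_equivalence_general
    {Ω : Type*} [MeasureSpace Ω] [IsProbabilityMeasure (ℙ : Measure Ω)]
    (ε : ℕ → Ω → ℝ) (hmeas : ∀ t, Measurable (ε t))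
    (hindep : iIndepFun ε ℙ)
    (hid : ∀ t, IdentDistrib (ε t) (ε 1) ℙ ℙ)
    (hvar : ∫ ω, (ε 1 ω) ^ 2 ∂ℙ = 1)
    (hmom4 : Integrable (fun ω => (ε 1 ω) ^ 4) ℙ)
    (hmom4_gt : 1 < ∫ ω, (ε 1 ω) ^ 4 ∂ℙ)
    (γ : ℝ) (hγ : γ ∈ Set.Ioo (0:ℝ) 1)
    (a q : ℕ → ℕ)
    (hq : ∀ n, q n = ⌊(n : ℝ) ^ γ⌋₊)
    (w : ℕ → ℕ → Ω → ℝ)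
    (hw : TendstoInMeasure ℙ
      (fun (n : ℕ) ω => Real.sqrt (q n) *
        ⨆ t ∈ Finset.Icc (a n + 1) (a n + q n), |w n t ω - 1|)
      atTop (fun _ => 0))
    (Cbar C : ℕ → ℕ → Ω → ℝ) (ηbar η : ℕ → Ω → ℝ) (Bbar B : ℕ → ℕ → Ω → ℝ)
    (hCbar : ∀ n k ω, Cbar n k ω =
      ∑ t ∈ Finset.Icc (a n + 1) (a n + k), w n t ω * (ε t ω) ^ 2)
    (hC : ∀ n k ω, C n k ω = ∑ t ∈ Finset.Icc (a n + 1) (a n + k), (ε t ω) ^ 2)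
    (hηbar : ∀ n ω, ηbar n ω =
      (q n : ℝ)⁻¹ * ∑ t ∈ Finset.Icc (a n + 1) (a n + q n), (w n t ω) ^ 2 * (ε t ω) ^ 4)
    (hη : ∀ n ω, η n ω =
      (q n : ℝ)⁻¹ * ∑ t ∈ Finset.Icc (a n + 1) (a n + q n), (ε t ω) ^ 4)
    (hBbar : ∀ n k ω, Bbar n k ω =
      (Cbar n k ω - (k : ℝ) / (q n) * Cbar n (q n) ω) /
        Real.sqrt (ηbar n ω - ((q n : ℝ)⁻¹ * Cbar n (q n) ω) ^ 2))
    (hB : ∀ n k ω, B n k ω =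
      (C n k ω - (k : ℝ) / (q n) * C n (q n) ω) /
        Real.sqrt (η n ω - ((q n : ℝ)⁻¹ * C n (q n) ω) ^ 2)) :
    TendstoInMeasure ℙ
      (fun (n : ℕ) ω => ⨆ k ∈ Finset.Icc 1 (q n),
        |(Real.sqrt (q n))⁻¹ * Bbar n k ω - (Real.sqrt (q n))⁻¹ * B n k ω|)
      atTop (fun _ => 0) := by
  have hq_top : Tendsto q atTop atTop := by
    rw [funext hq]
    exact tendsto_nat_floor_rpow_atTop hγ.1
  have hsq : Measurable fun x : ℝ => x ^ 2 := measurable_id.pow_const 2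
  have hmean := tendstoInMeasure_windowMean (fun t => (hmeas t).pow_const 2)
    (hindep.comp _ fun _ => hsq) (fun t => (hid t).comp hsq)
    (integrable_sq_of_integrable_pow_four (hmeas 1).aestronglyMeasurable hmom4) a hq_top
  have hmean_sq := tendstoInMeasure_windowMean (fun t => ((hmeas t).pow_const 2).pow_const 2)
    (hindep.comp _ fun _ => hsq.comp hsq) (fun t => (hid t).comp (hsq.comp hsq))
    (by simpa only [← pow_mul] using hmom4) a hq_top
  rw [hvar] at hmean
  obtain ⟨θ, hθ, K, hK, hbound⟩ := exists_iSup_abs_cusum_mul_sub_le (m := ∫ ω, (ε 1 ω ^ 2) ^ 2)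
    (by simpa only [← pow_mul] using hmom4_gt)
  have hB' : ∀ n k ω, B n k ω = cusum (fun t => ε t ω ^ 2) (a n) (q n) k := by
    simp only [hB, hC, hη, cusum, windowMean, windowSum, ← pow_mul, implies_true]
  have hBbar' : ∀ n k ω, Bbar n k ω = cusum (fun t => w n t ω * ε t ω ^ 2) (a n) (q n) k := by
    simp only [hBbar, hCbar, hηbar, cusum, windowMean, windowSum, mul_pow, ← pow_mul, implies_true]
  simp only [hB', hBbar']
  refine tendstoInMeasure_zero_of_norm_le_mul hK hw (tendsto_measure_compl_inter
    (tendsto_measure_compl_inter (hmean.tendsto_measure_compl_setOf_dist_lt hθ)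
      (hmean_sq.tendsto_measure_compl_setOf_dist_lt hθ))
    (hw.tendsto_measure_compl_setOf_dist_lt hθ)) ?_
  filter_upwards [hq_top.eventually_ge_atTop 1] with n hn ω ⟨⟨hX, hY⟩, hU⟩
  simp only [Set.mem_ofPred_eq, Real.dist_eq, sub_zero] at hX hY hU
  rw [Real.norm_of_nonneg (biSup_abs_nonneg _ _),
    Real.norm_of_nonneg (mul_nonneg (Real.sqrt_nonneg _) (biSup_abs_nonneg _ _))]
  exact hbound (ε · ω ^ 2) (w n · ω) _ _ hn (fun t _ => sq_nonneg _) (abs_lt.1 hU).2 hX hY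

/-- asymptotic-equivalence content of Proposition 4. If `E[ε₁⁴] > 1` and
the random weights `w_{t,n}` satisfy `q^{1/2} max_t |w_{t,n} − 1| → 0` in probability, then
the corrected subsample CUSUM statistic (built from `w_{t,n} ε_t²`) and the uncorrected one
(built from `ε_t²`) are uniformly asymptotically equivalent. -/
theorem corrected_cusum_asymptotic_equivalence
    {Ω : Type*} [MeasureSpace Ω] [IsProbabilityMeasure (ℙ : Measure Ω)]
    (ε : ℕ → Ω → ℝ) (hmeas : ∀ t, Measurable (ε t))
    (hindep : iIndepFun ε ℙ)
    (hid : ∀ t, IdentDistrib (ε t) (ε 1) ℙ ℙ)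
    (hvar : ∫ ω, (ε 1 ω) ^ 2 ∂ℙ = 1)
    (hmom4 : Integrable (fun ω => (ε 1 ω) ^ 4) ℙ)
    (hmom4_gt : 1 < ∫ ω, (ε 1 ω) ^ 4 ∂ℙ)
    (γ : ℝ) (hγ : γ ∈ Set.Ioo (0:ℝ) 1)
    (r : ℕ → ℝ) (hr : ∀ n, r n ∈ Set.Ioo (0:ℝ) 1)
    (a q : ℕ → ℕ)
    (ha : ∀ n, a n = ⌊r n * n⌋₊)
    (hq : ∀ n, q n = ⌊(n : ℝ) ^ γ⌋₊)
    (h_sub : ∀ n, a n + q n ≤ n)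
    (w : ℕ → ℕ → Ω → ℝ)
    (hw_meas : ∀ n t, Measurable (w n t))
    (hw : TendstoInMeasure ℙ
      (fun (n : ℕ) ω => Real.sqrt (q n) *
        ⨆ t ∈ Finset.Icc (a n + 1) (a n + q n), |w n t ω - 1|)
      atTop (fun _ => 0))
    (Cbar C : ℕ → ℕ → Ω → ℝ) (ηbar η : ℕ → Ω → ℝ) (Bbar B : ℕ → ℕ → Ω → ℝ)
    (hCbar : ∀ n k ω, Cbar n k ω =
      ∑ t ∈ Finset.Icc (a n + 1) (a n + k), w n t ω * (ε t ω) ^ 2)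
    (hC : ∀ n k ω, C n k ω = ∑ t ∈ Finset.Icc (a n + 1) (a n + k), (ε t ω) ^ 2)
    (hηbar : ∀ n ω, ηbar n ω =
      (q n : ℝ)⁻¹ * ∑ t ∈ Finset.Icc (a n + 1) (a n + q n), (w n t ω) ^ 2 * (ε t ω) ^ 4)
    (hη : ∀ n ω, η n ω =
      (q n : ℝ)⁻¹ * ∑ t ∈ Finset.Icc (a n + 1) (a n + q n), (ε t ω) ^ 4)
    (hBbar : ∀ n k ω, Bbar n k ω =
      (Cbar n k ω - (k : ℝ) / (q n) * Cbar n (q n) ω) /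
        Real.sqrt (ηbar n ω - ((q n : ℝ)⁻¹ * Cbar n (q n) ω) ^ 2))
    (hB : ∀ n k ω, B n k ω =
      (C n k ω - (k : ℝ) / (q n) * C n (q n) ω) /
        Real.sqrt (η n ω - ((q n : ℝ)⁻¹ * C n (q n) ω) ^ 2)) :
    TendstoInMeasure ℙ
      (fun (n : ℕ) ω => ⨆ k ∈ Finset.Icc 1 (q n),
        |(Real.sqrt (q n))⁻¹ * Bbar n k ω - (Real.sqrt (q n))⁻¹ * B n k ω|)
      atTop (fun _ => 0) :=
  corrected_cusum_asymptotic_equivalence_general ε hmeas hindep hid hvar hmom4 hmom4_gt γ hγ a q hq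
    w hw Cbar C ηbar η Bbar B hCbar hC hηbar hη hBbar hB
end

section
/- (Limit of the break-drift term d₂ in the proof of Proposition 3.) Fix 0 < l < 1 and s ∈ [l, 1]. Then (1/q) [ Σ_{t=a_n+⌊lq⌋+1}^{a_n+⌊sq⌋} ε_t² − (⌊sq⌋/q) Σ_{t=a_n+⌊lq⌋+1}^{a_n+q} ε_t² ] converges in probability to l(s−1) as n → ∞. -/
/-!
Because `⌊lq⌋ ≤ ⌊sq⌋ ≤ q`, the statistic is a weighted sum `∑ w_t ε_t²` over the longer window,
with weights `w_t = q⁻¹ (𝟙[t ≤ a + ⌊sq⌋] - ⌊sq⌋/q)` bounded by `1/q`. Its mean is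
`(⌊lq⌋/q) (⌊sq⌋/q - 1) → l (s - 1)`, and by independence its variance is at most `Var(ε²)/q → 0`,
so Chebyshev's inequality gives convergence in probability.
-/

open MeasureTheory ProbabilityTheory Filter Topology Finset

section WeakLaw

variable {Ω ι κ : Type*} {mΩ : MeasurableSpace Ω} {μ : Measure Ω}

theorem tendstoInMeasure_const_of_tendsto_integral_of_tendsto_variance [IsFiniteMeasure μ]
    {Y : ι → Ω → ℝ} {l : Filter ι} {c : ℝ} (hY : ∀ i, MemLp (Y i) 2 μ)
    (hmean : Tendsto (fun i => μ[Y i]) l (𝓝 c))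
    (hvar : Tendsto (fun i => variance (Y i) μ) l (𝓝 0)) :
    TendstoInMeasure μ Y l (fun _ => c) := by
  rw [tendstoInMeasure_iff_dist]
  intro e he
  have hbound : Tendsto (fun i => ENNReal.ofReal (variance (Y i) μ / (e / 2) ^ 2)) l (𝓝 0) := by
    simpa using ENNReal.tendsto_ofReal (hvar.div_const ((e / 2) ^ 2))
  refine tendsto_of_tendsto_of_tendsto_of_le_of_le' tendsto_const_nhds hbound
    (Eventually.of_forall fun _ => zero_le) ?_
  filter_upwards [Metric.tendsto_nhds.mp hmean (e / 2) (half_pos he)] with i hi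
  calc μ {ω | e ≤ dist (Y i ω) c} ≤ μ {ω | e / 2 ≤ |Y i ω - μ[Y i]|} := by
        refine measure_mono fun ω hω => ?_
        simp only [Set.mem_ofPred_eq, Real.dist_eq] at hω hi ⊢
        linarith [abs_sub_le (Y i ω) (μ[Y i]) c]
    _ ≤ _ := meas_ge_le_variance_div_sq (hY i) (half_pos he)

theorem memLp_two_sq_of_integrable_pow_four {X : Ω → ℝ} (hX : AEMeasurable X μ)
    (h4 : Integrable (fun ω => X ω ^ 4) μ) : MemLp (fun ω => X ω ^ 2) 2 μ :=
  (memLp_two_iff_integrable_sq (hX.pow_const 2).aestronglyMeasurable).mpr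
    (by simpa only [← pow_mul] using h4)

variable {X : κ → Ω → ℝ}

theorem variance_sum_mul_of_iIndepFun (hind : iIndepFun X μ) (hX : ∀ t, MemLp (X t) 2 μ)
    (S : Finset κ) (w : κ → ℝ) :
    variance (fun ω => ∑ t ∈ S, w t * X t ω) μ = ∑ t ∈ S, w t ^ 2 * variance (X t) μ := by
  have hwX : ∀ t, MemLp (fun ω => w t * X t ω) 2 μ := fun t => (hX t).const_mul (w t)
  have hind' : iIndepFun (fun t ω => w t * X t ω) μ :=
    hind.comp (fun t x => w t * x) fun t => measurable_const.mul measurable_id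
  calc variance (fun ω => ∑ t ∈ S, w t * X t ω) μ
      = variance (∑ t ∈ S, fun ω => w t * X t ω) μ := by simp only [Finset.sum_fn]
    _ = ∑ t ∈ S, variance (fun ω => w t * X t ω) μ :=
        IndepFun.variance_sum (fun t _ => hwX t) fun _ _ _ _ hst => hind'.indepFun hst
    _ = ∑ t ∈ S, w t ^ 2 * variance (X t) μ :=
        sum_congr rfl fun t _ => variance_const_mul (w t) (X t) μ

theorem tendstoInMeasure_sum_mul_of_iIndepFun [IsFiniteMeasure μ] {m V a : ℝ}
    (hind : iIndepFun X μ) (hX : ∀ t, MemLp (X t) 2 μ) (hmean : ∀ t, μ[X t] = m)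
    (hvar : ∀ t, variance (X t) μ ≤ V) {l : Filter ι} {S : ι → Finset κ} {w : ι → κ → ℝ}
    (hw : Tendsto (fun i => ∑ t ∈ S i, w i t) l (𝓝 a))
    (hw2 : Tendsto (fun i => ∑ t ∈ S i, w i t ^ 2) l (𝓝 0)) :
    TendstoInMeasure μ (fun i ω => ∑ t ∈ S i, w i t * X t ω) l (fun _ => a * m) := by
  refine tendstoInMeasure_const_of_tendsto_integral_of_tendsto_variance
    (fun i => memLp_finsetSum _ fun t _ => (hX t).const_mul (w i t)) ?_ ?_
  · have hint : ∀ i, ∫ ω, ∑ t ∈ S i, w i t * X t ω ∂μ = (∑ t ∈ S i, w i t) * m := fun i => by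
      rw [integral_finsetSum _ fun t _ => ((hX t).integrable one_le_two).const_mul (w i t)]
      simp only [integral_const_mul, hmean, sum_mul]
    simpa only [hint] using hw.mul_const m
  · have hle : ∀ i, variance (fun ω => ∑ t ∈ S i, w i t * X t ω) μ ≤ (∑ t ∈ S i, w i t ^ 2) * V :=
      fun i => by
        rw [variance_sum_mul_of_iIndepFun hind hX, sum_mul]
        exact sum_le_sum fun t _ => mul_le_mul_of_nonneg_left (hvar t) (sq_nonneg _)
    refine tendsto_of_tendsto_of_tendsto_of_le_of_le tendsto_const_nhds ?_
      (fun i => variance_nonneg _ _) hle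
    simpa using hw2.mul_const V

end WeakLaw

theorem sum_sub_mul_sum_eq_sum_ite_sub_mul {κ : Type*} [DecidableEq κ] {A B : Finset κ}
    (hAB : A ⊆ B) (c : ℝ) (f : κ → ℝ) :
    ∑ t ∈ A, f t - c * ∑ t ∈ B, f t = ∑ t ∈ B, ((if t ∈ A then 1 else 0) - c) * f t := by
  simp only [sub_mul, sum_sub_distrib, ite_mul, one_mul, zero_mul, sum_ite_mem,
    inter_eq_right.mpr hAB, mul_sum]

section BreakDrift

/-- The coefficient of `ε_t²` in `d₂`, with `k = a_n`, `L = ⌊lq⌋` and `S = ⌊sq⌋`. -/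
noncomputable def driftWeight (q L S k t : ℕ) : ℝ :=
  (q : ℝ)⁻¹ * ((if t ∈ Icc (k + L + 1) (k + S) then 1 else 0) - (S : ℝ) / q)

variable {q L S : ℕ}

theorem sum_driftWeight_mul (hS : S ≤ q) (k : ℕ) (f : ℕ → ℝ) :
    ∑ t ∈ Icc (k + L + 1) (k + q), driftWeight q L S k t * f t =
      (q : ℝ)⁻¹ * (∑ t ∈ Icc (k + L + 1) (k + S), f t -
        (S : ℝ) / q * ∑ t ∈ Icc (k + L + 1) (k + q), f t) := by
  rw [sum_sub_mul_sum_eq_sum_ite_sub_mul (Icc_subset_Icc le_rfl (by omega)), mul_sum]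
  simp only [driftWeight, mul_assoc]

theorem sum_driftWeight (hLS : L ≤ S) (hS : S ≤ q) (hq : q ≠ 0) (k : ℕ) :
    ∑ t ∈ Icc (k + L + 1) (k + q), driftWeight q L S k t = L / q * (S / q - 1) := by
  have h := sum_driftWeight_mul (L := L) hS k 1
  simp only [Pi.one_apply, mul_one, sum_const, Nat.card_Icc, nsmul_eq_mul] at h
  rw [h, show k + S + 1 - (k + L + 1) = S - L by omega,
    show k + q + 1 - (k + L + 1) = q - L by omega, Nat.cast_sub hLS, Nat.cast_sub (hLS.trans hS)]
  field_simp
  ring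

theorem driftWeight_sq_le (hS : S ≤ q) (k t : ℕ) : driftWeight q L S k t ^ 2 ≤ (q : ℝ)⁻¹ ^ 2 := by
  have hc : (S : ℝ) / q ≤ 1 := div_le_one_of_le₀ (by exact_mod_cast hS) q.cast_nonneg
  have hc' : 0 ≤ (S : ℝ) / q := by positivity
  rw [driftWeight, mul_pow]
  refine mul_le_of_le_one_right (sq_nonneg _) (sq_le_one_iff_abs_le_one _ |>.mpr ?_)
  split_ifs <;> rw [abs_le] <;> constructor <;> linarith

theorem sum_driftWeight_sq_le (hS : S ≤ q) (k : ℕ) :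
    ∑ t ∈ Icc (k + L + 1) (k + q), driftWeight q L S k t ^ 2 ≤ (q : ℝ)⁻¹ := by
  calc ∑ t ∈ Icc (k + L + 1) (k + q), driftWeight q L S k t ^ 2
      ≤ ∑ t ∈ Icc (k + L + 1) (k + q), (q : ℝ)⁻¹ ^ 2 :=
        sum_le_sum fun t _ => driftWeight_sq_le hS k t
    _ ≤ q * (q : ℝ)⁻¹ ^ 2 := by
        rw [sum_const, nsmul_eq_mul, Nat.card_Icc]
        gcongr
        exact_mod_cast (by omega : k + q + 1 - (k + L + 1) ≤ q)
    _ = (q : ℝ)⁻¹ := by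
        rcases eq_or_ne q 0 with rfl | hq
        · simp
        · field_simp

theorem natFloor_mul_le {s : ℝ} (hs : s ≤ 1) (q : ℕ) : ⌊s * q⌋₊ ≤ q :=
  Nat.floor_le_of_le (mul_le_of_le_one_left q.cast_nonneg hs)

theorem tendsto_sum_driftWeight {q k : ℕ → ℕ} (hq : Tendsto q atTop atTop) {l s : ℝ}
    (hl : 0 ≤ l) (hls : l ≤ s) (hs : s ≤ 1) :
    Tendsto (fun n => ∑ t ∈ Icc (k n + ⌊l * q n⌋₊ + 1) (k n + q n),
      driftWeight (q n) ⌊l * q n⌋₊ ⌊s * q n⌋₊ (k n) t) atTop (𝓝 (l * (s - 1))) := by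
  have hqR : Tendsto (fun n => (q n : ℝ)) atTop atTop := tendsto_natCast_atTop_atTop.comp hq
  have hL := (tendsto_nat_floor_mul_div_atTop hl).comp hqR
  have hS := (tendsto_nat_floor_mul_div_atTop (hl.trans hls)).comp hqR
  refine (hL.mul (hS.sub_const 1)).congr' ?_
  filter_upwards [hq.eventually_ne_atTop 0] with n hn
  exact (sum_driftWeight (Nat.floor_mono (by gcongr)) (natFloor_mul_le hs (q n)) hn (k n)).symm

theorem tendsto_sum_driftWeight_sq {q L S k : ℕ → ℕ} (hq : Tendsto q atTop atTop)
    (hS : ∀ n, S n ≤ q n) :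
    Tendsto (fun n => ∑ t ∈ Icc (k n + L n + 1) (k n + q n),
      driftWeight (q n) (L n) (S n) (k n) t ^ 2) atTop (𝓝 0) :=
  tendsto_of_tendsto_of_tendsto_of_le_of_le tendsto_const_nhds
    (tendsto_natCast_atTop_atTop.comp hq).inv_tendsto_atTop
    (fun _ => sum_nonneg fun _ _ => sq_nonneg _) fun n => sum_driftWeight_sq_le (hS n) (k n)

end BreakDrift

theorem break_drift_limit_general
    {Ω : Type*} [MeasureSpace Ω] [IsProbabilityMeasure (ℙ : Measure Ω)]
    (ε : ℕ → Ω → ℝ)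
    (hindep : iIndepFun ε ℙ)
    (hid : ∀ t, IdentDistrib (ε t) (ε 1) ℙ ℙ)
    (hvar : ∫ ω, (ε 1 ω) ^ 2 ∂ℙ = 1)
    (hmom4 : Integrable (fun ω => (ε 1 ω) ^ 4) ℙ)
    (γ : ℝ) (hγ : γ ∈ Set.Ioo (0:ℝ) 1)
    (a q : ℕ → ℕ)
    (hq : ∀ n, q n = ⌊(n : ℝ) ^ γ⌋₊)
    (l s : ℝ) (hl : 0 < l) (hs : s ∈ Set.Icc l 1) :
    TendstoInMeasure ℙ
      (fun (n : ℕ) ω => (q n : ℝ)⁻¹ *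
        ((∑ t ∈ Finset.Icc (a n + ⌊l * (q n : ℝ)⌋₊ + 1) (a n + ⌊s * (q n : ℝ)⌋₊),
            (ε t ω) ^ 2) -
          (⌊s * (q n : ℝ)⌋₊ : ℝ) / (q n) *
            ∑ t ∈ Finset.Icc (a n + ⌊l * (q n : ℝ)⌋₊ + 1) (a n + q n), (ε t ω) ^ 2))
      atTop (fun _ => l * (s - 1)) := by
  have hq_top : Tendsto q atTop atTop :=
    (tendsto_nat_floor_atTop.comp
      ((tendsto_rpow_atTop hγ.1).comp tendsto_natCast_atTop_atTop)).congr fun n => (hq n).symm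
  have hsq : ∀ t, IdentDistrib (fun ω => ε t ω ^ 2) (fun ω => ε 1 ω ^ 2) ℙ ℙ :=
    fun t => (hid t).comp (measurable_id.pow_const 2)
  have hL2 : MemLp (fun ω => ε 1 ω ^ 2) 2 ℙ :=
    memLp_two_sq_of_integrable_pow_four (hid 1).aemeasurable_snd hmom4
  have key := tendstoInMeasure_sum_mul_of_iIndepFun (X := fun t ω => ε t ω ^ 2) (m := 1)
    (hindep.comp (fun _ x => x ^ 2) fun _ => measurable_id.pow_const 2)
    (fun t => (hsq t).memLp_iff.mpr hL2) (fun t => (hsq t).integral_eq.trans hvar)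
    (fun t => (hsq t).variance_eq.le)
    (tendsto_sum_driftWeight (k := a) hq_top hl.le hs.1 hs.2)
    (tendsto_sum_driftWeight_sq hq_top fun n => natFloor_mul_le hs.2 (q n))
  rw [mul_one] at key
  exact key.congr_left fun n => ae_of_all _ fun ω =>
    sum_driftWeight_mul (natFloor_mul_le hs.2 (q n)) (a n) _

/-- limit of the break-drift term `d₂` in the proof of Proposition 3.
For fixed `0 < l < 1` and `s ∈ [l,1]`,
`(1/q)[∑_{t=a_n+⌊lq⌋+1}^{a_n+⌊sq⌋} ε_t² − (⌊sq⌋/q) ∑_{t=a_n+⌊lq⌋+1}^{a_n+q} ε_t²]`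
converges in probability to `l(s−1)`. -/
theorem break_drift_limit
    {Ω : Type*} [MeasureSpace Ω] [IsProbabilityMeasure (ℙ : Measure Ω)]
    (ε : ℕ → Ω → ℝ) (hmeas : ∀ t, Measurable (ε t))
    (hindep : iIndepFun ε ℙ)
    (hid : ∀ t, IdentDistrib (ε t) (ε 1) ℙ ℙ)
    (hvar : ∫ ω, (ε 1 ω) ^ 2 ∂ℙ = 1)
    (hmom4 : Integrable (fun ω => (ε 1 ω) ^ 4) ℙ)
    (γ : ℝ) (hγ : γ ∈ Set.Ioo (0:ℝ) 1)
    (r : ℕ → ℝ) (hr : ∀ n, r n ∈ Set.Ioo (0:ℝ) 1)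
    (a q : ℕ → ℕ)
    (ha : ∀ n, a n = ⌊r n * n⌋₊)
    (hq : ∀ n, q n = ⌊(n : ℝ) ^ γ⌋₊)
    (h_sub : ∀ n, a n + q n ≤ n)
    (l s : ℝ) (hl : 0 < l) (hl1 : l < 1) (hs : s ∈ Set.Icc l 1) :
    TendstoInMeasure ℙ
      (fun (n : ℕ) ω => (q n : ℝ)⁻¹ *
        ((∑ t ∈ Finset.Icc (a n + ⌊l * (q n : ℝ)⌋₊ + 1) (a n + ⌊s * (q n : ℝ)⌋₊),
            (ε t ω) ^ 2) -
          (⌊s * (q n : ℝ)⌋₊ : ℝ) / (q n) *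
            ∑ t ∈ Finset.Icc (a n + ⌊l * (q n : ℝ)⌋₊ + 1) (a n + q n), (ε t ω) ^ 2))
      atTop (fun _ => l * (s - 1)) :=
  break_drift_limit_general ε hindep hid hvar hmom4 γ hγ a q hq l s hl hs
end
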